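/- arXiv:1809.07816 — 3 statements merged into one kernel-verified Lean document; each statement's English description precedes it below -/
import Mathlib

section
/- Let n ≥ 1. A nonempty subset S of Z_{2n+1} is a subalgebra of Z_{2n+1} if and only if S = U ∪ (−U) for some nonempty subset U of {0,1,…,n}. Moreover every proper subalgebra S of Z_{2n+1} admits a bijective homomorphism onto Z_{2m} where m = |S|/2 if 0 ∉ S, and onto Z_{2m+1} where m = (|S|−1)/2 if 0 ∈ S; in particular every proper subalgebra of Z_{2n+1} is isomorphic to Z_k for some k < 2n+1. -/
/-- Sugihara implication on the integers. -/
def SImp (a b : ℤ) : ℤ := if a ≤ b then max (-a) b else min (-a) b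

/-- The universe of the Sugihara algebra `Z_{2n+1}`. -/
def Zodd (n : ℕ) : Set ℤ := {a : ℤ | -(n : ℤ) ≤ a ∧ a ≤ (n : ℤ)}

/-- The universe of the Sugihara algebra `Z_{2n}`. -/
def Zeven (n : ℕ) : Set ℤ := {a : ℤ | (-(n : ℤ) ≤ a ∧ a ≤ (n : ℤ)) ∧ a ≠ 0}

/-- `S` is a subalgebra of (the subset `Z` of) the Sugihara algebra on `ℤ`. -/
def Subalg (Z S : Set ℤ) : Prop :=
  S.Nonempty ∧ S ⊆ Z ∧
    ∀ a ∈ S, ∀ b ∈ S, min a b ∈ S ∧ max a b ∈ S ∧ -a ∈ S ∧ SImp a b ∈ S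

/-- `h` is a homomorphism from `S` to `T` (preserving ∧, ∨, ¬, →). -/
def SHom (S T : Set ℤ) (h : ℤ → ℤ) : Prop :=
  Set.MapsTo h S T ∧
    ∀ a ∈ S, ∀ b ∈ S,
      h (min a b) = min (h a) (h b) ∧ h (max a b) = max (h a) (h b) ∧
      h (-a) = -h a ∧ h (SImp a b) = SImp (h a) (h b)

/-!
Each Sugihara operation returns one of its arguments or the negation of the first, so the
subalgebras of `Z_{2n+1}` are exactly its nonempty subsets closed under negation. If such a set `S`
has `p` positive elements, `x ↦ sign x * #{s ∈ S | 0 < s ≤ |x|}` is strictly increasing and odd on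
`S` and maps it onto `Z_{2p}` or `Z_{2p+1}`, according as `0 ∉ S` or `0 ∈ S`; a strictly increasing
odd map preserves `min`, `max`, negation and the Sugihara implication.
-/

open Set

lemma SImp_eq_neg_or_eq (a b : ℤ) : SImp a b = -a ∨ SImp a b = b := by
  unfold SImp
  split_ifs
  exacts [max_choice _ _, min_choice _ _]

lemma subalg_iff_neg_mem {Z S : Set ℤ} :
    Subalg Z S ↔ S.Nonempty ∧ S ⊆ Z ∧ ∀ a ∈ S, -a ∈ S := by
  refine ⟨fun ⟨hne, hsub, hcl⟩ => ⟨hne, hsub, fun a ha => (hcl a ha a ha).2.2.1⟩,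
    fun ⟨hne, hsub, hneg⟩ => ⟨hne, hsub, fun a ha b hb => ⟨?_, ?_, hneg a ha, ?_⟩⟩⟩
  · rcases min_choice a b with h | h <;> rw [h] <;> assumption
  · rcases max_choice a b with h | h <;> rw [h] <;> assumption
  · rcases SImp_eq_neg_or_eq a b with h | h <;> rw [h]
    exacts [hneg a ha, hb]

lemma exists_eq_union_neg_image_iff {n : ℕ} {S : Set ℤ} (hsub : S ⊆ Zodd n) :
    (∃ U : Set ℤ, U.Nonempty ∧ U ⊆ Icc 0 (n : ℤ) ∧ S = U ∪ (fun x : ℤ => -x) '' U) ↔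
      S.Nonempty ∧ ∀ a ∈ S, -a ∈ S := by
  constructor
  · rintro ⟨U, ⟨u, hu⟩, -, rfl⟩
    rw [image_neg_eq_neg]
    refine ⟨⟨u, Or.inl hu⟩, fun a ha => ?_⟩
    rcases ha with ha | ha
    · exact Or.inr (by rwa [Set.mem_neg, neg_neg])
    · exact Or.inl ha
  · rintro ⟨⟨a, ha⟩, hneg⟩
    have habs : |a| ∈ S := by
      rcases abs_choice a with h | h <;> rw [h]
      exacts [ha, hneg a ha]
    refine ⟨S ∩ Icc 0 (n : ℤ), ⟨|a|, habs, abs_nonneg a, abs_le.2 (hsub ha)⟩,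
      inter_subset_right, ?_⟩
    ext x
    rw [image_neg_eq_neg]
    simp only [mem_union, mem_inter_iff, mem_Icc, Set.mem_neg]
    constructor
    · intro hx
      obtain ⟨hnx, hxn⟩ := hsub hx
      rcases le_total 0 x with h | h
      · exact Or.inl ⟨hx, h, hxn⟩
      · exact Or.inr ⟨hneg x hx, by omega, by omega⟩
    · rintro (⟨hx, -⟩ | ⟨hx, -⟩)
      · exact hx
      · simpa using hneg _ hx

lemma SHom_of_strictMonoOn {S T : Set ℤ} {f : ℤ → ℤ} (hmaps : MapsTo f S T)
    (hf : StrictMonoOn f S) (hneg : ∀ a ∈ S, -a ∈ S) (hf_neg : ∀ a ∈ S, f (-a) = -f a) :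
    SHom S T f := by
  refine ⟨hmaps, fun a ha b hb => ⟨hf.monotoneOn.map_min ha hb, hf.monotoneOn.map_max ha hb,
    hf_neg a ha, ?_⟩⟩
  unfold SImp
  simp only [hf.le_iff_le ha hb, ← hf_neg a ha]
  split_ifs
  · exact hf.monotoneOn.map_max (hneg a ha) hb
  · exact hf.monotoneOn.map_min (hneg a ha) hb

lemma Zodd_eq_Icc (n : ℕ) : Zodd n = Icc (-(n : ℤ)) n := rfl

lemma Zodd_finite (n : ℕ) : (Zodd n).Finite := (Zodd_eq_Icc n) ▸ finite_Icc _ _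

lemma ncard_Zodd (n : ℕ) : (Zodd n).ncard = 2 * n + 1 := by
  rw [Zodd_eq_Icc, ncard_eq_toFinset_card', toFinset_Icc, Int.card_Icc]
  omega

lemma Zeven_eq_sdiff (n : ℕ) : Zeven n = Zodd n \ {0} := rfl

lemma Zeven_finite (n : ℕ) : (Zeven n).Finite := (Zodd_finite n).sdiff

lemma ncard_Zeven (n : ℕ) : (Zeven n).ncard = 2 * n := by
  have h := ncard_sdiff_singleton_add_one (show (0 : ℤ) ∈ Zodd n by simp [Zodd]) (Zodd_finite n)
  rw [← Zeven_eq_sdiff, ncard_Zodd] at h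
  omega

lemma ncard_sdiff_zero {S : Set ℤ} (hf : S.Finite) (hneg : ∀ a ∈ S, -a ∈ S) :
    (S \ {0}).ncard = 2 * (S ∩ Ioi 0).ncard := by
  have hsplit : S \ {0} = (S ∩ Ioi 0) ∪ -(S ∩ Ioi 0) := by
    ext x
    simp only [mem_sdiff, mem_singleton_iff, mem_union, mem_inter_iff, mem_Ioi, Set.mem_neg]
    constructor
    · rintro ⟨hx, hx0⟩
      rcases lt_or_gt_of_ne hx0 with h | h
      · exact Or.inr ⟨hneg x hx, by omega⟩
      · exact Or.inl ⟨hx, h⟩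
    · rintro (⟨hx, h⟩ | ⟨hx, h⟩)
      · exact ⟨hx, h.ne'⟩
      · exact ⟨by simpa using hneg _ hx, by omega⟩
  have hdisj : Disjoint (S ∩ Ioi 0) (-(S ∩ Ioi 0)) :=
    disjoint_left.2 fun x ⟨_, hx⟩ ⟨_, hx'⟩ => by simp only [mem_Ioi] at hx hx'; omega
  rw [hsplit, ncard_union_eq hdisj (hf.inter_of_left _) (hf.inter_of_left _).neg, ncard_neg]
  ring

lemma bijOn_of_injOn_of_ncard_le {α β : Type*} {f : α → β} {s : Set α} {t : Set β}
    (hmaps : MapsTo f s t) (hinj : InjOn f s) (ht : t.Finite) (hcard : t.ncard ≤ s.ncard) :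
    BijOn f s t :=
  ⟨hmaps, hinj, (eq_of_subset_of_ncard_le hmaps.image_subset (hinj.ncard_image ▸ hcard) ht).ge⟩

noncomputable def signedRank (S : Set ℤ) (x : ℤ) : ℤ := x.sign * (S ∩ Ioc 0 |x|).ncard

section signedRank

variable {S : Set ℤ}

lemma signedRank_neg (S : Set ℤ) (x : ℤ) : signedRank S (-x) = -signedRank S x := by
  simp [signedRank]

lemma signedRank_of_nonneg (S : Set ℤ) {x : ℤ} (hx : 0 ≤ x) :
    signedRank S x = (S ∩ Ioc 0 x).ncard := by
  rcases hx.eq_or_lt with rfl | hx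
  · simp [signedRank]
  · rw [signedRank, abs_of_pos hx, Int.sign_eq_one_of_pos hx, one_mul]

lemma abs_signedRank_le (hf : S.Finite) (x : ℤ) : |signedRank S x| ≤ (S ∩ Ioi 0).ncard := by
  have key : ∀ y, 0 ≤ y → |signedRank S y| ≤ (S ∩ Ioi 0).ncard := fun y hy => by
    rw [signedRank_of_nonneg S hy, abs_of_nonneg (by positivity)]
    exact_mod_cast ncard_le_ncard (inter_subset_inter_right _ Ioc_subset_Ioi_self)
      (hf.inter_of_left _)
  rcases le_total 0 x with hx | hx
  · exact key x hx
  · simpa [signedRank_neg] using key (-x) (by omega)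

lemma signedRank_lt_of_nonneg (hf : S.Finite) {a b : ℤ} (hb : b ∈ S) (ha : 0 ≤ a) (hab : a < b) :
    signedRank S a < signedRank S b := by
  rw [signedRank_of_nonneg S ha, signedRank_of_nonneg S (ha.trans hab.le)]
  have hss : S ∩ Ioc 0 a ⊂ S ∩ Ioc 0 b :=
    (ssubset_iff_of_subset (inter_subset_inter_right _ (Ioc_subset_Ioc_right hab.le))).2
      ⟨b, ⟨hb, ha.trans_lt hab, le_rfl⟩, fun h => hab.not_ge h.2.2⟩
  exact_mod_cast ncard_lt_ncard hss (hf.inter_of_left _)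

lemma signedRank_pos (hf : S.Finite) {x : ℤ} (hx : x ∈ S) (hx0 : 0 < x) : 0 < signedRank S x := by
  simpa [signedRank] using signedRank_lt_of_nonneg hf hx le_rfl hx0

lemma signedRank_ne_zero (hf : S.Finite) (hneg : ∀ a ∈ S, -a ∈ S) {x : ℤ} (hx : x ∈ S)
    (hx0 : x ≠ 0) : signedRank S x ≠ 0 := by
  rcases lt_or_gt_of_ne hx0 with h | h
  · rw [← neg_neg x, signedRank_neg, neg_ne_zero]
    exact (signedRank_pos hf (hneg x hx) (by omega)).ne'
  · exact (signedRank_pos hf hx h).ne'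

lemma strictMonoOn_signedRank (hf : S.Finite) (hneg : ∀ a ∈ S, -a ∈ S) :
    StrictMonoOn (signedRank S) S := by
  intro a ha b hb hab
  rcases le_or_gt 0 a with h0a | h0a
  · exact signedRank_lt_of_nonneg hf hb h0a hab
  rcases le_or_gt 0 b with h0b | h0b
  · calc signedRank S a = -signedRank S (-a) := by rw [signedRank_neg, neg_neg]
      _ < 0 := neg_neg_of_pos (signedRank_pos hf (hneg a ha) (by omega))
      _ ≤ signedRank S b := by rw [signedRank_of_nonneg S h0b]; positivity
  · have h := signedRank_lt_of_nonneg hf (hneg a ha) (by omega : 0 ≤ -b) (by omega : -b < -a)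
    rw [signedRank_neg, signedRank_neg] at h
    exact neg_lt_neg_iff.1 h

end signedRank

theorem stmt1_general (n : ℕ) (S : Set ℤ) (hsub : S ⊆ Zodd n) :
    (Subalg (Zodd n) S ↔
      ∃ U : Set ℤ, U.Nonempty ∧ U ⊆ Set.Icc 0 (n : ℤ) ∧ S = U ∪ (fun x : ℤ => -x) '' U) ∧
    (Subalg (Zodd n) S → S ≠ Zodd n →
      ((0 : ℤ) ∉ S →
        S.ncard / 2 ≤ n ∧
          ∃ h : ℤ → ℤ, SHom S (Zeven (S.ncard / 2)) h ∧
            Set.BijOn h S (Zeven (S.ncard / 2))) ∧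
      ((0 : ℤ) ∈ S →
        (S.ncard - 1) / 2 < n ∧
          ∃ h : ℤ → ℤ, SHom S (Zodd ((S.ncard - 1) / 2)) h ∧
            Set.BijOn h S (Zodd ((S.ncard - 1) / 2)))) := by
  refine ⟨?_, fun hS hprop => ?_⟩
  · rw [subalg_iff_neg_mem, exists_eq_union_neg_image_iff hsub]
    exact ⟨fun h => ⟨h.1, h.2.2⟩, fun h => ⟨h.1, hsub, h.2⟩⟩
  obtain ⟨-, -, hneg⟩ := subalg_iff_neg_mem.1 hS
  have hf : S.Finite := (Zodd_finite n).subset hsub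
  set p := (S ∩ Ioi 0).ncard
  have hcard := ncard_sdiff_zero hf hneg
  have hmono := strictMonoOn_signedRank hf hneg
  have hhom : ∀ T, MapsTo (signedRank S) S T → SHom S T (signedRank S) := fun T hmaps =>
    SHom_of_strictMonoOn hmaps hmono hneg fun a _ => signedRank_neg S a
  have hrange : ∀ x ∈ S, signedRank S x ∈ Zodd p := fun x _ => abs_le.1 (abs_signedRank_le hf x)
  refine ⟨fun h0 => ?_, fun h0 => ?_⟩
  · rw [sdiff_singleton_eq_self h0] at hcard
    have hle : 2 * p ≤ 2 * n + 1 := hcard ▸ ncard_Zodd n ▸ ncard_le_ncard hsub (Zodd_finite n)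
    have hmaps : MapsTo (signedRank S) S (Zeven p) := fun x hx =>
      ⟨hrange x hx, signedRank_ne_zero hf hneg hx (ne_of_mem_of_not_mem hx h0)⟩
    rw [hcard, Nat.mul_div_cancel_left _ two_pos]
    exact ⟨by omega, _, hhom _ hmaps,
      bijOn_of_injOn_of_ncard_le hmaps hmono.injOn (Zeven_finite p) (by rw [ncard_Zeven, hcard])⟩
  · have hcard' : S.ncard = 2 * p + 1 := by rw [← ncard_sdiff_singleton_add_one h0 hf, hcard]
    have hlt : 2 * p + 1 < 2 * n + 1 :=
      hcard' ▸ ncard_Zodd n ▸ ncard_lt_ncard (hsub.ssubset_of_ne hprop) (Zodd_finite n)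
    rw [hcard', show (2 * p + 1 - 1) / 2 = p by omega]
    exact ⟨by omega, _, hhom _ hrange,
      bijOn_of_injOn_of_ncard_le hrange hmono.injOn (Zodd_finite p) (by rw [ncard_Zodd, hcard'])⟩

theorem stmt1 (n : ℕ) (hn : 1 ≤ n) (S : Set ℤ) (hne : S.Nonempty) (hsub : S ⊆ Zodd n) :
    (Subalg (Zodd n) S ↔
      ∃ U : Set ℤ, U.Nonempty ∧ U ⊆ Set.Icc 0 (n : ℤ) ∧ S = U ∪ (fun x : ℤ => -x) '' U) ∧
    (Subalg (Zodd n) S → S ≠ Zodd n →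
      ((0 : ℤ) ∉ S →
        S.ncard / 2 ≤ n ∧
          ∃ h : ℤ → ℤ, SHom S (Zeven (S.ncard / 2)) h ∧
            Set.BijOn h S (Zeven (S.ncard / 2))) ∧
      ((0 : ℤ) ∈ S →
        (S.ncard - 1) / 2 < n ∧
          ∃ h : ℤ → ℤ, SHom S (Zodd ((S.ncard - 1) / 2)) h ∧
            Set.BijOn h S (Zodd ((S.ncard - 1) / 2)))) :=
  stmt1_general n S hsub
end

section
/- Let n ≥ 1 and let F_n be the set of partial functions on Z_{2n} consisting of the identity map of Z_{2n} together with all finite compositions of the maps f_2, …, f_n, g. Then for every m with 1 ≤ m ≤ n and every subalgebra A of Z_{2n} with |A| = 2m, there exists φ ∈ F_n such that A ⊆ dom φ, the restriction of φ to A is a bijection from A onto Z_{2m} preserving ∧, ∨, ¬ and →, and the inverse of this bijection is the restriction to Z_{2m} of some member of F_n. -/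
/-- The partial endomorphism `f_i` of `Z_{2n}` (for `2 ≤ i ≤ n`), as a partial function. -/
def fE (n i : ℕ) : ℤ →. ℤ :=
  PFun.res
    (fun a => if a = (i : ℤ) - 1 then (i : ℤ) else if a = -((i : ℤ) - 1) then -(i : ℤ) else a)
    (Zeven n \ {(i : ℤ), -(i : ℤ)})

/-- The partial endomorphism `g` of `Z_{2n}`, as a partial function. -/
def gE (n : ℕ) : ℤ →. ℤ :=
  PFun.res (fun a => if 0 < a then a - 1 else a + 1) (Zeven n \ {1, -1})

/-- The generating set `{f_2, …, f_n, g}`. -/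
def GenEven (n : ℕ) : Set (ℤ →. ℤ) :=
  {p | (∃ i : ℕ, 2 ≤ i ∧ i ≤ n ∧ p = fE n i) ∨ p = gE n}

/-- Finite compositions of members of `G`. -/
inductive FinComp (G : Set (ℤ →. ℤ)) : (ℤ →. ℤ) → Prop
  | base {f : ℤ →. ℤ} : f ∈ G → FinComp G f
  | comp {f g : ℤ →. ℤ} : FinComp G f → FinComp G g → FinComp G (f.comp g)

/-!
A subalgebra of `Z_{2n}` is just a negation-closed set `{±a₀ < … < ±a_{m-1}}` of nonzero
integers (the lattice operations and `→` never leave such a set), and any odd order isomorphism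
between two such sets preserves `∧`, `∨`, `¬` and `→`. So it suffices to move `±aⱼ` to `±(j+1)`
by maps in `F_n`. Since `f_i` sends `±(i-1)` to `±i` and fixes everything other than `±i`, the
`aⱼ` can be raised one step at a time, topmost first, to `n-m+j+1`; then `g^(n-m)` brings them
down to `j+1`. Raising `j+1` to `aⱼ` the same way gives the inverse.
-/
open Set

theorem PFun.mem_comp_iff {α β γ : Type*} {f : β →. γ} {g : α →. β} {a : α} {c : γ} :
    c ∈ f.comp g a ↔ ∃ b ∈ g a, c ∈ f b :=
  Part.mem_bind_iff

lemma neg_mem_Zeven {n : ℕ} {x : ℤ} (hx : x ∈ Zeven n) : -x ∈ Zeven n := by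
  simp only [Zeven, mem_ofPred_eq] at hx ⊢
  omega

lemma FinComp.mem_Zeven {n : ℕ} {φ : ℤ →. ℤ} (hφ : FinComp (GenEven n) φ) {x y : ℤ}
    (hy : y ∈ φ x) : x ∈ Zeven n ∧ y ∈ Zeven n := by
  induction hφ generalizing x y with
  | base hf =>
    rcases hf with ⟨i, hi, hin, rfl⟩ | rfl <;>
    · simp only [fE, gE, PFun.mem_res, Zeven, mem_sdiff, mem_ofPred_eq, mem_insert_iff,
        mem_singleton_iff] at hy ⊢
      split_ifs at hy <;> omega
  | comp _ _ ihf ihg =>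
    obtain ⟨z, hz, hy⟩ := PFun.mem_comp_iff.1 hy
    exact ⟨(ihg hz).1, (ihf hy).2⟩

def Fn (n : ℕ) : Set (ℤ →. ℤ) := {φ | φ = PFun.res id (Zeven n) ∨ FinComp (GenEven n) φ}

lemma res_id_comp {n : ℕ} {φ : ℤ →. ℤ} (hφ : FinComp (GenEven n) φ) :
    (PFun.res id (Zeven n)).comp φ = φ := by
  refine PFun.ext fun x y => ?_
  simp only [PFun.mem_comp_iff, PFun.mem_res, id]
  exact ⟨by rintro ⟨_, hz, -, rfl⟩; exact hz, fun hy => ⟨y, hy, (hφ.mem_Zeven hy).2, rfl⟩⟩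

lemma comp_res_id {n : ℕ} {φ : ℤ →. ℤ} (hφ : FinComp (GenEven n) φ) :
    φ.comp (PFun.res id (Zeven n)) = φ := by
  refine PFun.ext fun x y => ?_
  simp only [PFun.mem_comp_iff, PFun.mem_res, id]
  exact ⟨by rintro ⟨_, ⟨-, rfl⟩, hy⟩; exact hy, fun hy => ⟨x, ⟨(hφ.mem_Zeven hy).1, rfl⟩, hy⟩⟩

lemma comp_mem_Fn {n : ℕ} {φ ψ : ℤ →. ℤ} (hφ : φ ∈ Fn n) (hψ : ψ ∈ Fn n) : φ.comp ψ ∈ Fn n := by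
  rcases hφ with rfl | hφ <;> rcases hψ with rfl | hψ
  · refine Or.inl (PFun.ext fun x y => ?_)
    simp only [PFun.mem_comp_iff, PFun.mem_res, id]
    exact ⟨by rintro ⟨_, ⟨hx, rfl⟩, -, rfl⟩; exact ⟨hx, rfl⟩,
      by rintro ⟨hx, rfl⟩; exact ⟨x, ⟨hx, rfl⟩, hx, rfl⟩⟩
  · exact Or.inr (by rwa [res_id_comp hψ])
  · exact Or.inr (by rwa [comp_res_id hφ])
  · exact Or.inr (hφ.comp hψ)

lemma fE_mem_Fn {n i : ℕ} (hi : 2 ≤ i) (hin : i ≤ n) : fE n i ∈ Fn n :=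
  Or.inr (.base (Or.inl ⟨i, hi, hin, rfl⟩))

lemma gE_mem_Fn (n : ℕ) : gE n ∈ Fn n :=
  Or.inr (.base (Or.inr rfl))

section Moves

variable {m : ℕ}

def Moves (φ : ℤ →. ℤ) (a b : Fin m → ℤ) : Prop := ∀ j, b j ∈ φ (a j) ∧ -b j ∈ φ (-a j)

lemma Moves.comp {φ ψ : ℤ →. ℤ} {a b c : Fin m → ℤ} (hφ : Moves φ a b) (hψ : Moves ψ b c) :
    Moves (ψ.comp φ) a c := fun j =>
  ⟨PFun.mem_comp_iff.2 ⟨_, (hφ j).1, (hψ j).1⟩, PFun.mem_comp_iff.2 ⟨_, (hφ j).2, (hψ j).2⟩⟩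

lemma moves_res_id {n : ℕ} {a : Fin m → ℤ} (ha : ∀ j, 0 < a j ∧ a j ≤ n) :
    Moves (PFun.res id (Zeven n)) a a := by
  intro j
  have haj : a j ∈ Zeven n := by
    simp only [Zeven, mem_ofPred_eq]
    grind
  exact ⟨(PFun.mem_res ..).2 ⟨haj, rfl⟩, (PFun.mem_res ..).2 ⟨neg_mem_Zeven haj, rfl⟩⟩

lemma moves_gE {n : ℕ} {v : Fin m → ℤ} (hv : ∀ j, 1 < v j ∧ v j ≤ n) :
    Moves (gE n) v (fun j => v j - 1) := by
  intro j
  have := hv j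
  simp only [gE, PFun.mem_res, Zeven, mem_sdiff, mem_ofPred_eq, mem_insert_iff,
    mem_singleton_iff]
  split_ifs <;> omega

lemma moves_fE {n i : ℕ} {a : Fin m → ℤ} (ha : Function.Injective a)
    (ha0 : ∀ k, 0 < a k ∧ a k ≤ n) {j : Fin m} (hi : (i : ℤ) = a j + 1) (hin : i ≤ n)
    (hia : ∀ k, a k ≠ i) : Moves (fE n i) a (Function.update a j i) := by
  intro k
  have := ha0 k
  have := hia k
  rcases eq_or_ne k j with rfl | hk
  · simp only [Function.update_self, fE, PFun.mem_res, Zeven, mem_sdiff, mem_ofPred_eq,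
      mem_insert_iff, mem_singleton_iff]
    split_ifs <;> omega
  · have := ha.ne hk
    have := ha0 j
    simp only [Function.update_of_ne hk, fE, PFun.mem_res, Zeven, mem_sdiff, mem_ofPred_eq,
      mem_insert_iff, mem_singleton_iff]
    split_ifs <;> omega

lemma exists_moves_of_eq_add {n : ℕ} (k : ℕ) {v w : Fin m → ℤ} (hw : ∀ j, 0 < w j)
    (hvw : ∀ j, v j = w j + k) (hv : ∀ j, v j ≤ n) : ∃ γ ∈ Fn n, Moves γ v w := by
  induction k generalizing v with
  | zero =>
    obtain rfl : v = w := funext fun j => by simpa using hvw j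
    exact ⟨_, Or.inl rfl, moves_res_id fun j => ⟨hw j, hv j⟩⟩
  | succ k ih =>
    obtain ⟨γ, hγ, hγvw⟩ := ih (v := fun j => v j - 1) (fun j => by grind) (fun j => by grind)
    exact ⟨γ.comp (gE n), comp_mem_Fn hγ (gE_mem_Fn n), (moves_gE fun j => by grind).comp hγvw⟩

lemma exists_moves_step {n : ℕ} {a b : Fin m → ℤ} (ha : StrictMono a) (hb : StrictMono b)
    (ha0 : ∀ j, 0 < a j) (hab : a ≤ b) (hbn : ∀ j, b j ≤ n) (hne : a ≠ b) :
    ∃ a' : Fin m → ℤ, StrictMono a' ∧ a ≤ a' ∧ a' ≤ b ∧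
      ∑ j, (b j - a' j).toNat < ∑ j, (b j - a j).toNat ∧ ∃ f ∈ Fn n, Moves f a a' := by
  classical
  obtain ⟨j, hj, hjmax⟩ := (Finset.univ.filter fun k => a k < b k).exists_max_image id
    (by obtain ⟨k, hk⟩ := Function.ne_iff.1 hne; exact ⟨k, by simpa using (hab k).lt_of_ne hk⟩)
  replace hj : a j < b j := by simpa using hj
  -- Every index above `j` is already in place, so `a j + 1` is a free slot.
  have hgap : ∀ k, j < k → a j + 2 ≤ a k := fun k hk => by
    have := hb hk
    have : ¬ a k < b k := fun h => hk.not_ge (hjmax k (by simpa using h))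
    grind
  obtain ⟨i, hi⟩ : ∃ i : ℕ, (i : ℤ) = a j + 1 := ⟨(a j + 1).toNat, by grind⟩
  refine ⟨Function.update a j i, ?_, ?_, ?_, ?_, fE n i, fE_mem_Fn (by grind) (by grind), ?_⟩
  · intro p q hpq
    have := ha hpq
    simp only [Function.update_apply]
    split_ifs with hp hq hq <;> subst_vars
    · exact (lt_irrefl _ hpq).elim
    · have := hgap q hpq
      omega
    · omega
    · exact this
  · intro k
    rcases eq_or_ne k j with rfl | hk <;> simp [Function.update_of_ne, *]
  · intro k
    rcases eq_or_ne k j with rfl | hk <;> simp [Function.update_of_ne, hab k, *]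
  · refine Finset.sum_lt_sum (fun k _ => ?_) ⟨j, Finset.mem_univ _, by simp; omega⟩
    rcases eq_or_ne k j with rfl | hk <;> simp [Function.update_of_ne, *]; omega
  · refine moves_fE ha.injective (fun k => ⟨ha0 k, (hab k).trans (hbn k)⟩) hi (by grind)
      fun k hk => ?_
    rcases lt_trichotomy k j with hkj | rfl | hkj
    · have := ha hkj; omega
    · omega
    · have := hgap k hkj; omega

lemma exists_moves_of_le {n : ℕ} {a b : Fin m → ℤ} (ha : StrictMono a) (hb : StrictMono b)
    (ha0 : ∀ j, 0 < a j) (hab : a ≤ b) (hbn : ∀ j, b j ≤ n) : ∃ χ ∈ Fn n, Moves χ a b := by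
  induction hN : ∑ j, (b j - a j).toNat using Nat.strong_induction_on generalizing a with
  | _ N ih =>
  obtain rfl | hne := eq_or_ne a b
  · exact ⟨_, Or.inl rfl, moves_res_id fun j => ⟨ha0 j, hbn j⟩⟩
  obtain ⟨a', ha', haa', ha'b, hlt, f, hf, hfa⟩ := exists_moves_step ha hb ha0 hab hbn hne
  obtain ⟨χ, hχ, hχa⟩ := ih _ (hN ▸ hlt) ha' (fun j => (ha0 j).trans_le (haa' j)) ha'b rfl
  exact ⟨χ.comp f, comp_mem_Fn hχ hf, hfa.comp hχa⟩

end Moves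

lemma StrictMono.fin_sub_le_sub {m : ℕ} {a : Fin m → ℤ} (ha : StrictMono a) {i j : Fin m}
    (hij : i ≤ j) : (j : ℤ) - i ≤ a j - a i := by
  have := Finset.card_le_card_of_injOn a (s := Finset.Icc i j) (t := Finset.Icc (a i) (a j))
    (fun k hk => by
      simp only [Finset.coe_Icc, mem_Icc] at hk ⊢
      exact ⟨ha.monotone hk.1, ha.monotone hk.2⟩)
    ha.injective.injOn
  rw [Fin.card_Icc, Int.card_Icc] at this
  omega

lemma sHom_of_strictMonoOn {S T : Set ℤ} {e : ℤ → ℤ} (hmaps : MapsTo e S T)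
    (hneg : ∀ x ∈ S, -x ∈ S) (hmono : StrictMonoOn e S) (hodd : ∀ x ∈ S, e (-x) = -e x) :
    SHom S T e := by
  refine ⟨hmaps, fun x hx y hy => ⟨hmono.monotoneOn.map_min hx hy,
    hmono.monotoneOn.map_max hx hy, hodd x hx, ?_⟩⟩
  simp only [SImp, hmono.le_iff_le hx hy]
  split_ifs
  · rw [hmono.monotoneOn.map_max (hneg x hx) hy, hodd x hx]
  · rw [hmono.monotoneOn.map_min (hneg x hx) hy, hodd x hx]

section SymmRange

variable {m : ℕ}

def symmRange (a : Fin m → ℤ) : Set ℤ := range a ∪ -range a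

lemma forall_mem_symmRange {a : Fin m → ℤ} {p : ℤ → Prop} :
    (∀ x ∈ symmRange a, p x) ↔ ∀ j, p (a j) ∧ p (-a j) := by
  refine ⟨fun h j => ⟨h _ (Or.inl ⟨j, rfl⟩), h _ (Or.inr ⟨j, (neg_neg _).symm⟩)⟩, ?_⟩
  rintro h x (⟨j, rfl⟩ | ⟨j, hj⟩)
  · exact (h j).1
  · rw [← neg_neg x, ← hj]
    exact (h j).2

lemma apply_mem_symmRange (a : Fin m → ℤ) (j : Fin m) : a j ∈ symmRange a ∧ -a j ∈ symmRange a :=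
  forall_mem_symmRange.1 (fun _ hx => hx) j

lemma Zeven_eq_symmRange (m : ℕ) : Zeven m = symmRange (fun j : Fin m => (j : ℤ) + 1) := by
  ext x
  refine ⟨fun ⟨⟨h1, h2⟩, h0⟩ => ?_, fun hx => forall_mem_symmRange.2 (fun j => ?_) x hx⟩
  · rcases h0.lt_or_gt with h | h
    · exact Or.inr ⟨⟨(-x - 1).toNat, by omega⟩, by simp only; omega⟩
    · exact Or.inl ⟨⟨(x - 1).toNat, by omega⟩, by simp only; omega⟩
  · simp only [Zeven, mem_ofPred_eq]
    omega

lemma exists_strictMono_eq_symmRange {n : ℕ} {A : Set ℤ} (hAZ : A ⊆ Zeven n)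
    (hneg : ∀ x ∈ A, -x ∈ A) (hcard : A.ncard = 2 * m) :
    ∃ a : Fin m → ℤ, StrictMono a ∧ (∀ j, 0 < a j ∧ a j ≤ n) ∧ A = symmRange a := by
  set P := {x ∈ A | 0 < x}
  have hPfin : P.Finite := (finite_Icc (-(n : ℤ)) n).subset fun x hx => (hAZ hx.1).1
  have hAP : A = P ∪ -P := by
    ext x
    have h0 : x ∈ A → x ≠ 0 := fun hx => (hAZ hx).2
    simp only [P, mem_union, mem_neg, mem_sep_iff]
    grind
  have hdisj : Disjoint P (-P) := disjoint_left.2 fun x hx hx' => by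
    simp only [P, mem_neg, mem_sep_iff] at hx hx'
    omega
  have hPcard : P.ncard = m := by
    rw [hAP, ncard_union_eq hdisj hPfin hPfin.neg, ncard_neg] at hcard
    omega
  set s := hPfin.toFinset
  have hs : s.card = m := by rw [← hPcard, ncard_eq_toFinset_card P hPfin]
  have hrange : range (s.orderEmbOfFin hs) = P := by
    rw [Finset.range_orderEmbOfFin, hPfin.coe_toFinset]
  refine ⟨s.orderEmbOfFin hs, (s.orderEmbOfFin hs).strictMono, fun j => ?_, ?_⟩
  · have : s.orderEmbOfFin hs j ∈ P := hrange ▸ mem_range_self j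
    exact ⟨this.2, (hAZ this.1).1.2⟩
  · rw [symmRange, hrange, ← hAP]

lemma Moves.exists_fun {φ : ℤ →. ℤ} {a b : Fin m → ℤ} (h : Moves φ a b) :
    ∃ e : ℤ → ℤ, (∀ x ∈ symmRange a, e x ∈ φ x) ∧ ∀ j, e (a j) = b j ∧ e (-a j) = -b j := by
  have hdom : ∀ x ∈ symmRange a, ∃ y, y ∈ φ x :=
    forall_mem_symmRange.2 fun j => ⟨⟨_, (h j).1⟩, ⟨_, (h j).2⟩⟩
  choose! e he using hdom
  refine ⟨e, he, fun j => ?_⟩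
  have hej := forall_mem_symmRange.1 he j
  exact ⟨Part.mem_unique hej.1 (h j).1, Part.mem_unique hej.2 (h j).2⟩

variable {a b : Fin m → ℤ} {e : ℤ → ℤ}

lemma strictMonoOn_symmRange (ha : StrictMono a) (hb : StrictMono b) (ha0 : ∀ j, 0 < a j)
    (hb0 : ∀ j, 0 < b j) (he : ∀ j, e (a j) = b j ∧ e (-a j) = -b j) :
    StrictMonoOn e (symmRange a) := by
  refine forall_mem_symmRange.2 fun i =>
    ⟨forall_mem_symmRange.2 fun j => ⟨fun h => ?_, fun h => ?_⟩,
      forall_mem_symmRange.2 fun j => ⟨fun h => ?_, fun h => ?_⟩⟩ <;>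
    simp only [(he i).1, (he i).2, (he j).1, (he j).2]
  · exact hb (ha.lt_iff_lt.1 h)
  · linarith [ha0 i, ha0 j]
  · linarith [hb0 i, hb0 j]
  · exact neg_lt_neg (hb (ha.lt_iff_lt.1 (neg_lt_neg_iff.1 h)))

lemma bijOn_symmRange (ha : StrictMono a) (hb : StrictMono b) (ha0 : ∀ j, 0 < a j)
    (hb0 : ∀ j, 0 < b j) (he : ∀ j, e (a j) = b j ∧ e (-a j) = -b j) :
    BijOn e (symmRange a) (symmRange b) := by
  refine ⟨forall_mem_symmRange.2 fun j => ?_, (strictMonoOn_symmRange ha hb ha0 hb0 he).injOn,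
    fun y hy => forall_mem_symmRange.2 (fun j => ?_) y hy⟩
  · rw [(he j).1, (he j).2]
    exact apply_mem_symmRange b j
  · exact ⟨⟨a j, (apply_mem_symmRange a j).1, (he j).1⟩,
      ⟨-a j, (apply_mem_symmRange a j).2, (he j).2⟩⟩

lemma sHom_symmRange (ha : StrictMono a) (hb : StrictMono b) (ha0 : ∀ j, 0 < a j)
    (hb0 : ∀ j, 0 < b j) (he : ∀ j, e (a j) = b j ∧ e (-a j) = -b j) :
    SHom (symmRange a) (symmRange b) e :=
  sHom_of_strictMonoOn (bijOn_symmRange ha hb ha0 hb0 he).mapsTo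
    (forall_mem_symmRange.2 fun j => by simpa using (apply_mem_symmRange a j).symm)
    (strictMonoOn_symmRange ha hb ha0 hb0 he)
    (forall_mem_symmRange.2 fun j => by simp [(he j).1, (he j).2])

lemma leftInvOn_symmRange {e' : ℤ → ℤ} (he : ∀ j, e (a j) = b j ∧ e (-a j) = -b j)
    (he' : ∀ j, e' (b j) = a j ∧ e' (-b j) = -a j) : ∀ x ∈ symmRange a, e' (e x) = x :=
  forall_mem_symmRange.2 fun j => by simp [(he j).1, (he j).2, (he' j).1, (he' j).2]

end SymmRange

theorem stmt6_general (n : ℕ) (m : ℕ) (hmn : m ≤ n)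
    (A : Set ℤ) (hA : Subalg (Zeven n) A) (hcard : A.ncard = 2 * m) :
    ∃ φ : ℤ →. ℤ, (φ = PFun.res id (Zeven n) ∨ FinComp (GenEven n) φ) ∧
      A ⊆ φ.Dom ∧
      ∃ e : ℤ → ℤ, (∀ a ∈ A, e a ∈ φ a) ∧ SHom A (Zeven m) e ∧ Set.BijOn e A (Zeven m) ∧
        ∃ ψ : ℤ →. ℤ, (ψ = PFun.res id (Zeven n) ∨ FinComp (GenEven n) ψ) ∧
          Zeven m ⊆ ψ.Dom ∧
          ∃ e' : ℤ → ℤ, (∀ b ∈ Zeven m, e' b ∈ ψ b) ∧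
            (∀ a ∈ A, e' (e a) = a) ∧ ∀ b ∈ Zeven m, e (e' b) = b := by
  obtain ⟨a, ha, ha0n, rfl⟩ := exists_strictMono_eq_symmRange hA.2.1
    (fun x hx => (hA.2.2 x hx x hx).2.2.1) hcard
  have ha0 j : 0 < a j := (ha0n j).1
  rw [Zeven_eq_symmRange m]
  set b : Fin m → ℤ := fun j => (j : ℤ) + 1
  set t : Fin m → ℤ := fun j => b j + (n - m : ℕ)
  have hb : StrictMono b := fun i j h => by simpa [b] using h
  have hb0 j : 0 < b j := by positivity
  have hbounds j : b j ≤ a j ∧ a j ≤ t j ∧ t j ≤ n := by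
    have := ha.fin_sub_le_sub (show ⟨0, j.pos⟩ ≤ j from Nat.zero_le _)
    have := ha.fin_sub_le_sub (show j ≤ ⟨m - 1, by grind⟩ from Nat.le_sub_one_of_lt j.2)
    have := ha0n ⟨0, j.pos⟩
    have := ha0n ⟨m - 1, by grind⟩
    simp only [b, t] at *
    omega
  -- Push `A` to the top of `Z_{2n}` with the `f_i`, then shift it down with `g`.
  obtain ⟨χ, hχ, hχa⟩ := exists_moves_of_le ha (b := t) (fun i j h => by simpa [t] using hb h)
    ha0 (fun j => (hbounds j).2.1) (fun j => (hbounds j).2.2)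
  obtain ⟨γ, hγ, hγb⟩ := exists_moves_of_eq_add (n := n) (n - m) (v := t) hb0 (fun _ => rfl)
    (fun j => (hbounds j).2.2)
  obtain ⟨ψ, hψ, hψb⟩ := exists_moves_of_le hb ha hb0 (fun j => (hbounds j).1)
    (fun j => (ha0n j).2)
  obtain ⟨e, hφe, he⟩ := (hχa.comp hγb).exists_fun
  obtain ⟨e', hψe', he'⟩ := hψb.exists_fun
  exact ⟨γ.comp χ, comp_mem_Fn hγ hχ, fun x hx => (PFun.mem_dom _ _).2 ⟨_, hφe x hx⟩, e, hφe,
    sHom_symmRange ha hb ha0 hb0 he, bijOn_symmRange ha hb ha0 hb0 he, ψ, hψ,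
    fun x hx => (PFun.mem_dom _ _).2 ⟨_, hψe' x hx⟩, e', hψe', leftInvOn_symmRange he he',
    leftInvOn_symmRange he' he⟩

theorem stmt6 (n : ℕ) (hn : 1 ≤ n) (m : ℕ) (hm : 1 ≤ m) (hmn : m ≤ n)
    (A : Set ℤ) (hA : Subalg (Zeven n) A) (hcard : A.ncard = 2 * m) :
    ∃ φ : ℤ →. ℤ, (φ = PFun.res id (Zeven n) ∨ FinComp (GenEven n) φ) ∧
      A ⊆ φ.Dom ∧
      ∃ e : ℤ → ℤ, (∀ a ∈ A, e a ∈ φ a) ∧ SHom A (Zeven m) e ∧ Set.BijOn e A (Zeven m) ∧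
        ∃ ψ : ℤ →. ℤ, (ψ = PFun.res id (Zeven n) ∨ FinComp (GenEven n) ψ) ∧
          Zeven m ⊆ ψ.Dom ∧
          ∃ e' : ℤ → ℤ, (∀ b ∈ Zeven m, e' b ∈ ψ b) ∧
            (∀ a ∈ A, e' (e a) = a) ∧ ∀ b ∈ Zeven m, e (e' b) = b :=
  stmt6_general n m hmn A hA hcard
end

section
/- Let n ≥ 1 and let S be a subalgebra of Z_{2n+1}², i.e. a nonempty subset of Z_{2n+1} × Z_{2n+1} closed under the coordinatewise operations ∧, ∨, ¬, →. (i) If δ⁻(a) ≤ δ⁻(b) for all (a,b) ∈ S, then S is the graph of a partial endomorphism of Z_{2n+1}, i.e. there is a partial endomorphism e with S = {(a, e(a)) : a ∈ dom e}. (ii) If δ⁺(a) ≤ δ⁺(b) for all (a,b) ∈ S, then the converse relation Sˇ = {(b,a) : (a,b) ∈ S} is the graph of a partial endomorphism of Z_{2n+1}. (iii) If δ⁻(a) ≤ δ⁺(b) for all (a,b) ∈ S, then S is the graph of a partial endomorphism e of Z_{2n+1} with 0 ∉ dom e and 0 ∉ image(e). (iv) If δ⁺(a) ≤ δ⁻(b)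 for all (a,b) ∈ S, then S or Sˇ is the graph of a partial endomorphism of Z_{2n+1}. -/
/-- `h` with domain `D` is a partial endomorphism of (the algebra on) `Z`. -/
def PartialEnd (Z D : Set ℤ) (h : ℤ → ℤ) : Prop :=
  Subalg Z D ∧ Subalg Z (h '' D) ∧ SHom D (h '' D) h

/-- `S` is a subalgebra of `Z²` (coordinatewise operations). -/
def Subalg2 (Z : Set ℤ) (S : Set (ℤ × ℤ)) : Prop :=
  S.Nonempty ∧ S ⊆ Z ×ˢ Z ∧
    ∀ p ∈ S, ∀ q ∈ S,
      (min p.1 q.1, min p.2 q.2) ∈ S ∧ (max p.1 q.1, max p.2 q.2) ∈ S ∧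
      (-p.1, -p.2) ∈ S ∧ (SImp p.1 q.1, SImp p.2 q.2) ∈ S

/-- The endomorphism `g` of `Z_{2n+1}`, as a total function on `ℤ`. -/
def gOFun (a : ℤ) : ℤ := if 0 < a then a - 1 else if a < 0 then a + 1 else 0

/-- The map `δ⁺`. -/
def delp (a : ℤ) : ℤ := if 1 ≤ a then 1 else 0

/-- The map `δ⁻`. -/
def delm (a : ℤ) : ℤ := if 0 ≤ a then 1 else 0

/-!
If `(a, b), (a, c) ∈ S` with `b < c`, then `(a, b) → (a, c) = (|a|, t)` and
`(a, c) → (a, b) = (|a|, -t)` with `t = max (-b) c ≥ 1`. So a subalgebra `S` that is not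
functional contains such a pair, which violates `δ⁻ a ≤ δ⁻ b`, and under `δ⁺ a ≤ δ⁻ b` forces
`a = 0`. A functional subalgebra of `Z²` is the graph of a partial endomorphism.

Since `δ⁺ a = 1 - δ⁻ (-a)`, negating and swapping turns the hypothesis of (ii) into that of (i)
for `Sˇ` and leaves that of (iv) unchanged. In (iv), if both `S` and `Sˇ` branched over `0`,
then `(-s, 0) → (0, -t) = (s, -t)` with `s, t ≥ 1` would violate `δ⁺ a ≤ δ⁻ b`. Part (iii)
follows from (i) as `δ⁺ ≤ δ⁻`, and a point with a zero coordinate is excluded by considering it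
together with its negation.
-/

open Set

lemma SImp_self (a : ℤ) : SImp a a = |a| := by
  simp [SImp, abs_eq_max_neg, max_comm]

lemma SImp_of_le {a b : ℤ} (h : a ≤ b) : SImp a b = max (-a) b := if_pos h

lemma SImp_of_lt {a b : ℤ} (h : b < a) : SImp a b = min (-a) b := if_neg h.not_ge

lemma delp_neg (a : ℤ) : delp (-a) = 1 - delm a := by
  unfold delp delm; split_ifs <;> omega

lemma delm_neg (a : ℤ) : delm (-a) = 1 - delp a := by
  unfold delp delm; split_ifs <;> omega

lemma delp_le_delm (a : ℤ) : delp a ≤ delm a := by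
  unfold delp delm; split_ifs <;> omega

lemma mem_image_swap {S : Set (ℤ × ℤ)} {p : ℤ × ℤ} : p ∈ Prod.swap '' S ↔ p.swap ∈ S := by
  rw [image_swap_eq_preimage_swap, mem_preimage]

/-- The second coordinate of the point of `S` over `a`; meaningful when `Prod.fst` is injective
on `S` and `a ∈ Prod.fst '' S`. -/
noncomputable def graphFun (S : Set (ℤ × ℤ)) (a : ℤ) : ℤ :=
  (Function.invFunOn Prod.fst S a).2

section graphFun

variable {S : Set (ℤ × ℤ)}

lemma mk_graphFun_mem {a : ℤ} (ha : a ∈ Prod.fst '' S) : (a, graphFun S a) ∈ S := by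
  obtain ⟨hmem, hfst⟩ := Function.invFunOn_pos (f := Prod.fst) (s := S) (b := a) ha
  have : Function.invFunOn Prod.fst S a = (a, graphFun S a) := Prod.ext hfst rfl
  exact this ▸ hmem

lemma graphFun_fst (hS : InjOn Prod.fst S) {p : ℤ × ℤ} (hp : p ∈ S) : graphFun S p.1 = p.2 := by
  rw [graphFun, hS.leftInvOn_invFunOn hp]

lemma eq_setOf_graphFun (hS : InjOn Prod.fst S) :
    S = {p : ℤ × ℤ | p.1 ∈ Prod.fst '' S ∧ p.2 = graphFun S p.1} := by
  ext p
  refine ⟨fun hp => ⟨mem_image_of_mem _ hp, (graphFun_fst hS hp).symm⟩, ?_⟩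
  rintro ⟨hp, hp2⟩
  rw [← Prod.mk.eta (p := p), hp2]
  exact mk_graphFun_mem hp

lemma image_graphFun (hS : InjOn Prod.fst S) : graphFun S '' (Prod.fst '' S) = Prod.snd '' S := by
  rw [image_image]
  exact image_congr fun p hp => graphFun_fst hS hp

end graphFun

namespace Subalg2

variable {Z : Set ℤ} {S : Set (ℤ × ℤ)}

lemma neg_mem (hS : Subalg2 Z S) {p : ℤ × ℤ} (hp : p ∈ S) : (-p.1, -p.2) ∈ S :=
  (hS.2.2 p hp p hp).2.2.1

lemma sImp_mem (hS : Subalg2 Z S) {p q : ℤ × ℤ} (hp : p ∈ S) (hq : q ∈ S) :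
    (SImp p.1 q.1, SImp p.2 q.2) ∈ S :=
  (hS.2.2 p hp q hq).2.2.2

lemma swap (hS : Subalg2 Z S) : Subalg2 Z (Prod.swap '' S) := by
  obtain ⟨hne, hsub, hcl⟩ := hS
  refine ⟨hne.image _, ?_, fun p hp q hq => ?_⟩
  · rintro _ ⟨p, hp, rfl⟩
    exact (hsub hp).symm
  · rw [mem_image_swap] at hp hq
    simpa only [mem_image_swap, Prod.swap_prod_mk, Prod.fst_swap, Prod.snd_swap] using
      hcl _ hp _ hq

lemma image_fst (hS : Subalg2 Z S) : Subalg Z (Prod.fst '' S) := by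
  obtain ⟨hne, hsub, hcl⟩ := hS
  refine ⟨hne.image _, ?_, ?_⟩
  · rintro _ ⟨p, hp, rfl⟩
    exact (hsub hp).1
  · rintro _ ⟨p, hp, rfl⟩ _ ⟨q, hq, rfl⟩
    obtain ⟨hmin, hmax, hneg, himp⟩ := hcl p hp q hq
    exact ⟨⟨_, hmin, rfl⟩, ⟨_, hmax, rfl⟩, ⟨_, hneg, rfl⟩, ⟨_, himp, rfl⟩⟩

lemma image_snd (hS : Subalg2 Z S) : Subalg Z (Prod.snd '' S) := by
  simpa only [image_image, Prod.fst_swap] using hS.swap.image_fst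

lemma partialEnd_graphFun (hS : Subalg2 Z S) (hinj : InjOn Prod.fst S) :
    PartialEnd Z (Prod.fst '' S) (graphFun S) := by
  refine ⟨hS.image_fst, image_graphFun hinj ▸ hS.image_snd, mapsTo_image _ _, ?_⟩
  rintro a ha b hb
  obtain ⟨hmin, hmax, hneg, himp⟩ := hS.2.2 _ (mk_graphFun_mem ha) _ (mk_graphFun_mem hb)
  exact ⟨graphFun_fst hinj hmin, graphFun_fst hinj hmax, graphFun_fst hinj hneg,
    graphFun_fst hinj himp⟩

lemma exists_partialEnd (hS : Subalg2 Z S) (hinj : InjOn Prod.fst S) :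
    ∃ D : Set ℤ, ∃ h : ℤ → ℤ, PartialEnd Z D h ∧ S = {p : ℤ × ℤ | p.1 ∈ D ∧ p.2 = h p.1} :=
  ⟨_, _, hS.partialEnd_graphFun hinj, eq_setOf_graphFun hinj⟩

lemma exists_nonneg_pm_mem_of_not_injOn (hS : Subalg2 Z S) (hinj : ¬ InjOn Prod.fst S) :
    ∃ a t : ℤ, 0 ≤ a ∧ 1 ≤ t ∧ (a, t) ∈ S ∧ (a, -t) ∈ S := by
  obtain ⟨p, hp, q, hq, hfst, hpq⟩ : ∃ p ∈ S, ∃ q ∈ S, p.1 = q.1 ∧ p ≠ q := by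
    simpa [InjOn] using hinj
  have hsnd : p.2 ≠ q.2 := fun h => hpq (Prod.ext hfst h)
  wlog hlt : p.2 < q.2 generalizing p q
  · exact this q hq p hp hfst.symm hpq.symm hsnd.symm (by omega)
  have hpos := hS.sImp_mem hp hq
  have hneg := hS.sImp_mem hq hp
  rw [hfst, SImp_self, SImp_of_le hlt.le] at hpos
  rw [hfst, SImp_self, SImp_of_lt hlt, show min (-q.2) p.2 = -max (-p.2) q.2 by omega] at hneg
  exact ⟨_, _, abs_nonneg _, by omega, hpos, hneg⟩

lemma forall_mem_swap {P : ℤ → ℤ → Prop} (hS : Subalg2 Z S)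
    (hP : ∀ p ∈ S, P (-p.2) (-p.1)) : ∀ p ∈ Prod.swap '' S, P p.1 p.2 := by
  intro p hp
  simpa using hP _ (hS.neg_mem (mem_image_swap.mp hp))

lemma injOn_fst_of_delm_le (hS : Subalg2 Z S) (hd : ∀ p ∈ S, delm p.1 ≤ delm p.2) :
    InjOn Prod.fst S := by
  by_contra hinj
  obtain ⟨a, t, ha, ht, -, hneg⟩ := hS.exists_nonneg_pm_mem_of_not_injOn hinj
  have := hd _ hneg
  simp only [delm] at this
  split_ifs at this <;> omega

lemma ne_zero_of_delm_le_delp (hS : Subalg2 Z S) (hd : ∀ p ∈ S, delm p.1 ≤ delp p.2)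
    {p : ℤ × ℤ} (hp : p ∈ S) : p.1 ≠ 0 ∧ p.2 ≠ 0 := by
  have h₁ := hd _ hp
  have h₂ := hd _ (hS.neg_mem hp)
  simp only [delm, delp] at h₁ h₂
  split_ifs at h₁ h₂ <;> omega

lemma exists_zero_pm_mem_of_not_injOn (hS : Subalg2 Z S) (hd : ∀ p ∈ S, delp p.1 ≤ delm p.2)
    (hinj : ¬ InjOn Prod.fst S) : ∃ t : ℤ, 1 ≤ t ∧ (0, t) ∈ S ∧ (0, -t) ∈ S := by
  obtain ⟨a, t, ha, ht, hpos, hneg⟩ := hS.exists_nonneg_pm_mem_of_not_injOn hinj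
  have := hd _ hneg
  obtain rfl : a = 0 := by
    simp only [delm, delp] at this
    split_ifs at this <;> omega
  exact ⟨t, ht, hpos, hneg⟩

lemma injOn_fst_or_swap (hS : Subalg2 Z S) (hd : ∀ p ∈ S, delp p.1 ≤ delm p.2) :
    InjOn Prod.fst S ∨ InjOn Prod.fst (Prod.swap '' S) := by
  by_contra! ⟨hinj, hinj'⟩
  have hd' := hS.forall_mem_swap (P := fun x y => delp x ≤ delm y) fun p hp => by
    simp only [delp_neg, delm_neg]
    linarith [hd p hp]
  obtain ⟨t, ht, -, hneg⟩ := hS.exists_zero_pm_mem_of_not_injOn hd hinj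
  obtain ⟨s, hs, -, hneg'⟩ := hS.swap.exists_zero_pm_mem_of_not_injOn hd' hinj'
  have := hd _ (hS.sImp_mem (mem_image_swap.mp hneg') hneg)
  simp only [Prod.fst_swap, Prod.snd_swap, SImp_of_le (show -s ≤ 0 by omega),
    SImp_of_lt (show -t < 0 by omega), delp, delm] at this
  split_ifs at this <;> omega

end Subalg2

theorem stmt10_general (n : ℕ) (S : Set (ℤ × ℤ)) (hS : Subalg2 (Zodd n) S) :
    ((∀ p ∈ S, delm p.1 ≤ delm p.2) →
      ∃ D : Set ℤ, ∃ h : ℤ → ℤ, PartialEnd (Zodd n) D h ∧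
        S = {p : ℤ × ℤ | p.1 ∈ D ∧ p.2 = h p.1}) ∧
    ((∀ p ∈ S, delp p.1 ≤ delp p.2) →
      ∃ D : Set ℤ, ∃ h : ℤ → ℤ, PartialEnd (Zodd n) D h ∧
        Prod.swap '' S = {p : ℤ × ℤ | p.1 ∈ D ∧ p.2 = h p.1}) ∧
    ((∀ p ∈ S, delm p.1 ≤ delp p.2) →
      ∃ D : Set ℤ, ∃ h : ℤ → ℤ, PartialEnd (Zodd n) D h ∧
        (0 : ℤ) ∉ D ∧ (0 : ℤ) ∉ h '' D ∧
        S = {p : ℤ × ℤ | p.1 ∈ D ∧ p.2 = h p.1}) ∧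
    ((∀ p ∈ S, delp p.1 ≤ delm p.2) →
      ∃ D : Set ℤ, ∃ h : ℤ → ℤ, PartialEnd (Zodd n) D h ∧
        (S = {p : ℤ × ℤ | p.1 ∈ D ∧ p.2 = h p.1} ∨
          Prod.swap '' S = {p : ℤ × ℤ | p.1 ∈ D ∧ p.2 = h p.1})) := by
  refine ⟨fun hd => hS.exists_partialEnd (hS.injOn_fst_of_delm_le hd), fun hd => ?_,
    fun hd => ?_, fun hd => ?_⟩
  · refine hS.swap.exists_partialEnd (hS.swap.injOn_fst_of_delm_le
      (hS.forall_mem_swap (P := fun x y => delm x ≤ delm y) ?_))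
    intro p hp
    simp only [delm_neg]
    linarith [hd p hp]
  · have hinj := hS.injOn_fst_of_delm_le fun p hp => (delp_le_delm _).trans' (hd p hp)
    refine ⟨_, _, hS.partialEnd_graphFun hinj, ?_, ?_, eq_setOf_graphFun hinj⟩
    · rintro ⟨p, hp, h0⟩
      exact (hS.ne_zero_of_delm_le_delp hd hp).1 h0
    · rw [image_graphFun hinj]
      rintro ⟨p, hp, h0⟩
      exact (hS.ne_zero_of_delm_le_delp hd hp).2 h0
  · rcases hS.injOn_fst_or_swap hd with hinj | hinj
    · exact ⟨_, _, hS.partialEnd_graphFun hinj, Or.inl (eq_setOf_graphFun hinj)⟩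
    · exact ⟨_, _, hS.swap.partialEnd_graphFun hinj, Or.inr (eq_setOf_graphFun hinj)⟩

theorem stmt10 (n : ℕ) (hn : 1 ≤ n) (S : Set (ℤ × ℤ)) (hS : Subalg2 (Zodd n) S) :
    ((∀ p ∈ S, delm p.1 ≤ delm p.2) →
      ∃ D : Set ℤ, ∃ h : ℤ → ℤ, PartialEnd (Zodd n) D h ∧
        S = {p : ℤ × ℤ | p.1 ∈ D ∧ p.2 = h p.1}) ∧
    ((∀ p ∈ S, delp p.1 ≤ delp p.2) →
      ∃ D : Set ℤ, ∃ h : ℤ → ℤ, PartialEnd (Zodd n) D h ∧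
        Prod.swap '' S = {p : ℤ × ℤ | p.1 ∈ D ∧ p.2 = h p.1}) ∧
    ((∀ p ∈ S, delm p.1 ≤ delp p.2) →
      ∃ D : Set ℤ, ∃ h : ℤ → ℤ, PartialEnd (Zodd n) D h ∧
        (0 : ℤ) ∉ D ∧ (0 : ℤ) ∉ h '' D ∧
        S = {p : ℤ × ℤ | p.1 ∈ D ∧ p.2 = h p.1}) ∧
    ((∀ p ∈ S, delp p.1 ≤ delm p.2) →
      ∃ D : Set ℤ, ∃ h : ℤ → ℤ, PartialEnd (Zodd n) D h ∧
        (S = {p : ℤ × ℤ | p.1 ∈ D ∧ p.2 = h p.1} ∨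
          Prod.swap '' S = {p : ℤ × ℤ | p.1 ∈ D ∧ p.2 = h p.1})) :=
  stmt10_general n S hS
end
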